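/- Let M, N, N₁ be positive integers, and for n₁ = 1, …, N₁ let h_{n₁} ∈ ℂ^M and ζ_{n₁} ≥ 0, with σ_a ∈ ℝ and P ≥ 0. Define p_{n₁}(w) = Σ_{η=1}^{N} |h_{n₁}^H w_η|² + σ_a² and F(w, α) = Σ_{n₁=1}^{N₁} ζ_{n₁}(1 − α_{n₁}²)·p_{n₁}(w). Suppose (w^{(κ)}, α^{(κ)})_{κ ∈ ℕ} is a sequence with α^{(κ)} ∈ (0,1)^{N₁} and Σ_{n=1}^{N} ‖w_n^{(κ)}‖² ≤ P for every κ, such that for each κ the surrogate F^{(κ)}(w, α) = Σ_{n₁} ζ_{n₁}·p̆_{n₁}^{(κ)}(w, α_{n₁}) built at (w^{(κ)}, α^{(κ)}) satisfies F^{(κ)}(w^{(κ+1)}, α^{(κ+1)}) ≥ F^{(κ)}(w^{(κ)}, α^{(κ)}). Then the real sequence (F(w^{(κ)}, α^{(κ)}))_{κ ∈ ℕ} is nondecreasing, bounded above by Σ_{n₁=1}^{N₁} ζ_{n₁}(‖h_{n₁}‖²·P + σ_a²), and hence converges. -/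

import Mathlib

/-- Hermitian inner product `h^H w = ∑ i, conj (h i) * w i` on `ℂ^M`
(conjugate-linear in `h`). -/
noncomputable def hermInner {M : ℕ} (h w : Fin M → ℂ) : ℂ :=
  ∑ i, (starRingEnd ℂ) (h i) * w i

/-- Total received RF power `p(w) = ∑ η, |h^H w_η|² + σa²`. -/
noncomputable def rfPower {M N : ℕ} (h : Fin M → ℂ) (σa : ℝ)
    (w : Fin N → Fin M → ℂ) : ℝ :=
  (∑ η, ‖hermInner h (w η)‖ ^ 2) + σa ^ 2

/-- Surrogate (minorant) of the harvested energy `(1 - α²) p(w)` obtained by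
linearization at the point `(wh, αh)`. -/
noncomputable def breve {M N : ℕ} (h : Fin M → ℂ) (σa : ℝ)
    (wh : Fin N → Fin M → ℂ) (αh : ℝ) (w : Fin N → Fin M → ℂ) (α : ℝ) : ℝ :=
  2 * (1 - αh ^ 2) *
      ((∑ η, ((starRingEnd ℂ) (hermInner h (wh η)) * hermInner h (w η)).re) + σa ^ 2) -
    rfPower h σa wh * (1 - αh ^ 2) ^ 2 / (1 - α ^ 2)

/-!
Algorithm 1 is a minorize–maximize scheme. With `a = 1 - α̂²`, `t = 1 - α²`, `x = p(ŵ)`,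
`y = p(w)`, the surrogate reads `2a(S + σa²) - a²x/t`, where `S ≤ ∑ |h^H ŵ_η| |h^H w_η|`;
Cauchy–Schwarz on the vectors extended by the coordinate `|σa|` gives `S + σa² ≤ √x √y`,
and AM–GM gives `2a√x√y ≤ a²x/t + ty`. So the surrogate lies below `(1 - α²) p(w)`, with
equality at `(ŵ, α̂)`, whence `F(κ) = F⁽κ⁾(κ) ≤ F⁽κ⁾(κ+1) ≤ F(κ+1)`. Since `1 - α² ≤ 1` and
`|h^H w_η|² ≤ ‖h‖² ‖w_η‖²`, the objective is bounded, and a bounded monotone sequence converges.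
-/

open Finset ComplexConjugate

theorem sum_re_conj_mul_add_sq_le {ι : Type*} [Fintype ι] (u v : ι → ℂ) (s : ℝ) :
    (∑ i, (conj (u i) * v i).re) + s ^ 2 ≤
      √(∑ i, ‖u i‖ ^ 2 + s ^ 2) * √(∑ i, ‖v i‖ ^ 2 + s ^ 2) := by
  let f : Option ι → ℝ := fun o => o.elim |s| (‖u ·‖)
  let g : Option ι → ℝ := fun o => o.elim |s| (‖v ·‖)
  calc (∑ i, (conj (u i) * v i).re) + s ^ 2
      ≤ ∑ o, f o * g o := by
        rw [Fintype.sum_option, add_comm]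
        gcongr with i
        · simp [f, g, sq]
        · simpa [f, g] using Complex.re_le_norm (conj (u i) * v i)
    _ ≤ √(∑ o, f o ^ 2) * √(∑ o, g o ^ 2) := Real.sum_mul_le_sqrt_mul_sqrt _ _ _
    _ = _ := by simp [f, g, Fintype.sum_option, add_comm]

theorem two_mul_mul_sub_div_le {a t x y c : ℝ} (ha : 0 ≤ a) (ht : 0 < t) (hx : 0 ≤ x)
    (hy : 0 ≤ y) (hc : c ≤ √x * √y) : 2 * a * c - x * a ^ 2 / t ≤ t * y := by
  have amgm : 2 * a * t * c ≤ a ^ 2 * x + t ^ 2 * y :=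
    calc 2 * a * t * c ≤ 2 * (a * √x) * (t * √y) := by
          nlinarith [mul_nonneg ha ht.le]
      _ ≤ (a * √x) ^ 2 + (t * √y) ^ 2 := two_mul_le_add_sq _ _
      _ = a ^ 2 * x + t ^ 2 * y := by rw [mul_pow, mul_pow, Real.sq_sqrt hx, Real.sq_sqrt hy]
  rw [sub_le_iff_le_add, ← sub_le_iff_le_add', le_div_iff₀ ht]
  nlinarith

theorem rfPower_nonneg {M N : ℕ} (h : Fin M → ℂ) (σa : ℝ) (w : Fin N → Fin M → ℂ) :
    0 ≤ rfPower h σa w := by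
  unfold rfPower
  positivity

theorem norm_hermInner_sq_le {M : ℕ} (h v : Fin M → ℂ) :
    ‖hermInner h v‖ ^ 2 ≤ (∑ i, ‖h i‖ ^ 2) * ∑ i, ‖v i‖ ^ 2 :=
  calc ‖hermInner h v‖ ^ 2 ≤ (∑ i, ‖h i‖ * ‖v i‖) ^ 2 := by
        gcongr
        exact (norm_sum_le _ _).trans_eq (by simp)
    _ ≤ _ := sum_mul_sq_le_sq_mul_sq _ _ _

theorem rfPower_le {M N : ℕ} (h : Fin M → ℂ) (σa : ℝ) (w : Fin N → Fin M → ℂ) :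
    rfPower h σa w ≤ (∑ i, ‖h i‖ ^ 2) * (∑ η, ∑ i, ‖w η i‖ ^ 2) + σa ^ 2 := by
  unfold rfPower
  gcongr
  rw [mul_sum]
  exact sum_le_sum fun η _ => norm_hermInner_sq_le h (w η)

theorem breve_self {M N : ℕ} (h : Fin M → ℂ) (σa : ℝ) (w : Fin N → Fin M → ℂ) {α : ℝ}
    (hα : 1 - α ^ 2 ≠ 0) : breve h σa w α w α = (1 - α ^ 2) * rfPower h σa w := by
  simp only [breve, Complex.conj_mul', ← Complex.ofReal_pow, Complex.ofReal_re]
  unfold rfPower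
  field_simp
  ring

theorem breve_le {M N : ℕ} (h : Fin M → ℂ) (σa : ℝ) (wh w : Fin N → Fin M → ℂ) {αh α : ℝ}
    (hαh : αh ^ 2 ≤ 1) (hα : α ^ 2 < 1) :
    breve h σa wh αh w α ≤ (1 - α ^ 2) * rfPower h σa w :=
  two_mul_mul_sub_div_le (by linarith) (by linarith) (rfPower_nonneg ..) (rfPower_nonneg ..)
    (sum_re_conj_mul_add_sq_le _ _ σa)

section SumOverReceivers

variable {M N N₁ : ℕ} (h : Fin N₁ → Fin M → ℂ) (ζ : Fin N₁ → ℝ) (σa : ℝ)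

theorem sum_breve_self (w : Fin N → Fin M → ℂ) {α : Fin N₁ → ℝ} (hα : ∀ n, α n ^ 2 < 1) :
    ∑ n, ζ n * breve (h n) σa w (α n) w (α n) =
      ∑ n, ζ n * ((1 - α n ^ 2) * rfPower (h n) σa w) :=
  sum_congr rfl fun n _ => by rw [breve_self _ _ _ (by linarith [hα n])]

theorem sum_breve_le (hζ : ∀ n, 0 ≤ ζ n) (wh w : Fin N → Fin M → ℂ) {αh α : Fin N₁ → ℝ}
    (hαh : ∀ n, αh n ^ 2 ≤ 1) (hα : ∀ n, α n ^ 2 < 1) :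
    ∑ n, ζ n * breve (h n) σa wh (αh n) w (α n) ≤
      ∑ n, ζ n * ((1 - α n ^ 2) * rfPower (h n) σa w) :=
  sum_le_sum fun n _ => mul_le_mul_of_nonneg_left (breve_le _ _ _ _ (hαh n) (hα n)) (hζ n)

theorem sum_energy_le (hζ : ∀ n, 0 ≤ ζ n) (w : Fin N → Fin M → ℂ) (α : Fin N₁ → ℝ) :
    ∑ n, ζ n * ((1 - α n ^ 2) * rfPower (h n) σa w) ≤
      ∑ n, ζ n * ((∑ i, ‖h n i‖ ^ 2) * (∑ η, ∑ i, ‖w η i‖ ^ 2) + σa ^ 2) := by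
  gcongr with n
  · exact hζ n
  · exact (mul_le_of_le_one_left (rfPower_nonneg ..) (sub_le_self _ (sq_nonneg _))).trans
      (rfPower_le ..)

end SumOverReceivers

theorem path_following_convergence_general (M N N₁ : ℕ)
    (h : Fin N₁ → Fin M → ℂ) (ζ : Fin N₁ → ℝ) (hζ : ∀ n, 0 ≤ ζ n) (σa : ℝ)
    (P : ℝ)
    (w : ℕ → Fin N → Fin M → ℂ) (α : ℕ → Fin N₁ → ℝ)
    (hα : ∀ κ n, α κ n ∈ Set.Ioo (0 : ℝ) 1)
    (hpow : ∀ κ, (∑ n, ∑ i, ‖w κ n i‖ ^ 2) ≤ P)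
    (himp : ∀ κ,
      (∑ n, ζ n * breve (h n) σa (w κ) (α κ n) (w (κ + 1)) (α (κ + 1) n)) ≥
        (∑ n, ζ n * breve (h n) σa (w κ) (α κ n) (w κ) (α κ n))) :
    Monotone (fun κ => ∑ n, ζ n * ((1 - α κ n ^ 2) * rfPower (h n) σa (w κ))) ∧
    (∀ κ, (∑ n, ζ n * ((1 - α κ n ^ 2) * rfPower (h n) σa (w κ))) ≤
        ∑ n, ζ n * ((∑ i, ‖h n i‖ ^ 2) * P + σa ^ 2)) ∧
    ∃ L : ℝ,
      Filter.Tendsto (fun κ => ∑ n, ζ n * ((1 - α κ n ^ 2) * rfPower (h n) σa (w κ)))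
        Filter.atTop (nhds L) := by
  set F : ℕ → ℝ := fun κ => ∑ n, ζ n * ((1 - α κ n ^ 2) * rfPower (h n) σa (w κ))
  have hα_sq (κ : ℕ) (n : Fin N₁) : α κ n ^ 2 < 1 :=
    pow_lt_one₀ (hα κ n).1.le (hα κ n).2 two_ne_zero
  have hmono : Monotone F := monotone_nat_of_le_succ fun κ =>
    calc F κ = ∑ n, ζ n * breve (h n) σa (w κ) (α κ n) (w κ) (α κ n) :=
          (sum_breve_self h ζ σa (w κ) (hα_sq κ)).symm
      _ ≤ ∑ n, ζ n * breve (h n) σa (w κ) (α κ n) (w (κ + 1)) (α (κ + 1) n) := himp κ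
      _ ≤ F (κ + 1) :=
          sum_breve_le h ζ σa hζ _ _ (fun n => (hα_sq κ n).le) (hα_sq (κ + 1))
  have hbdd (κ : ℕ) : F κ ≤ ∑ n, ζ n * ((∑ i, ‖h n i‖ ^ 2) * P + σa ^ 2) := by
    refine (sum_energy_le h ζ σa hζ (w κ) (α κ)).trans ?_
    gcongr with n
    exacts [hζ n, hpow κ]
  exact ⟨hmono, hbdd, _, tendsto_atTop_ciSup hmono ⟨_, Set.forall_mem_range.2 hbdd⟩⟩

/-- Convergence of Algorithm 1: along iterates that never decrease the
surrogate built at the current point, the true sum-harvested-energy objective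
is nondecreasing, bounded above by `∑ ζ_{n₁}(‖h_{n₁}‖² P + σa²)`, and hence
converges. -/
theorem path_following_convergence (M N N₁ : ℕ) (hM : 0 < M) (hN : 0 < N)
    (hN₁ : 0 < N₁)
    (h : Fin N₁ → Fin M → ℂ) (ζ : Fin N₁ → ℝ) (hζ : ∀ n, 0 ≤ ζ n) (σa : ℝ)
    (P : ℝ) (hP : 0 ≤ P)
    (w : ℕ → Fin N → Fin M → ℂ) (α : ℕ → Fin N₁ → ℝ)
    (hα : ∀ κ n, α κ n ∈ Set.Ioo (0 : ℝ) 1)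
    (hpow : ∀ κ, (∑ n, ∑ i, ‖w κ n i‖ ^ 2) ≤ P)
    (himp : ∀ κ,
      (∑ n, ζ n * breve (h n) σa (w κ) (α κ n) (w (κ + 1)) (α (κ + 1) n)) ≥
        (∑ n, ζ n * breve (h n) σa (w κ) (α κ n) (w κ) (α κ n))) :
    Monotone (fun κ => ∑ n, ζ n * ((1 - α κ n ^ 2) * rfPower (h n) σa (w κ))) ∧
    (∀ κ, (∑ n, ζ n * ((1 - α κ n ^ 2) * rfPower (h n) σa (w κ))) ≤
        ∑ n, ζ n * ((∑ i, ‖h n i‖ ^ 2) * P + σa ^ 2)) ∧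
    ∃ L : ℝ,
      Filter.Tendsto (fun κ => ∑ n, ζ n * ((1 - α κ n ^ 2) * rfPower (h n) σa (w κ)))
        Filter.atTop (nhds L) :=
  path_following_convergence_general M N N₁ h ζ hζ σa P w α hα hpow himp
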